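/- arXiv:1605.01158 — 2 statements merged into one kernel-verified Lean document; each statement's English description precedes it below -/
import Mathlib

section
/- Suppose A = A_1 ⊞_s A_2 and Ā = Ā_1 ⊞_s Ā_2 are both in M_j, with A_1, Ā_1 ∈ M_g and A_2, Ā_2 ∈ M_h, g + h = j, and the same off-block value s. If χ(A_1) ≥ χ(Ā_1) and χ(A_2) ≥ χ(Ā_2), then χ(A) ≥ χ(Ā). -/
/-- Membership in the class `M_j` of ultrametric matrices from the paper. -/
def MemUltra (η : ℝ) {ι : Type*} [Fintype ι] [DecidableEq ι] (A : Matrix ι ι ℝ) : Prop :=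
  A.IsSymm ∧ (∀ i, A i i = 1) ∧
  (∀ i l, i ≠ l → 0 ≤ A i l ∧ A i l ≤ 1 - η) ∧
  (∀ i l p, i ≠ l → l ≠ p → i ≠ p → min (A l p) (A i p) ≤ A i l)

/-- `χ(B)`: the sum of all the entries of `B⁻¹`. -/
noncomputable def chi {ι : Type*} [Fintype ι] [DecidableEq ι] (B : Matrix ι ι ℝ) : ℝ :=
  ∑ i, ∑ l, B⁻¹ i l

/-- The block sum `A₁ ⊞_s A₂`. -/
def blockSum {g h : ℕ} (A₁ : Matrix (Fin g) (Fin g) ℝ) (A₂ : Matrix (Fin h) (Fin h) ℝ)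
    (s : ℝ) : Matrix (Fin g ⊕ Fin h) (Fin g ⊕ Fin h) ℝ :=
  Matrix.fromBlocks A₁ (Matrix.of fun _ _ => s) (Matrix.of fun _ _ => s) A₂

/-! An ultrametric matrix `A` with constant diagonal `d` and off-diagonal entries in `[s, d - η]`
satisfies `vᵀ A v ≥ s (∑ v)² + η ‖v‖²`. Indeed, subtracting the least off-diagonal entry `t` from
every entry leaves, by the ultrametric inequality, a block diagonal matrix (the class of one index
against the rest), and both blocks are again of this form with smaller size.

Hence the matrices of `M_j` are positive definite, and with `u = A⁻¹ 𝟙` we get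
`χ(A) = uᵀ A u ≥ s χ(A)² + η ‖u‖²`, so `0 ≤ χ(A)` and `s χ(A) < 1`. Solving the block system
gives `χ(A₁ ⊞_s A₂) = (x + y - 2sxy) / (1 - s²xy)` with `x = χ(A₁)`, `y = χ(A₂)`, and on that range
this is increasing in `x`, its derivative being `(1 - sy)² / (1 - s²xy)²`, and symmetric in `x, y`.
-/

open Matrix Finset

def quadFormOn {ι : Type*} (A : Matrix ι ι ℝ) (S : Finset ι) (v : ι → ℝ) : ℝ :=
  ∑ i ∈ S, ∑ l ∈ S, A i l * v i * v l

def IsUltrametric {ι : Type*} (A : Matrix ι ι ℝ) : Prop :=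
  ∀ i l p, i ≠ l → l ≠ p → i ≠ p → min (A l p) (A i p) ≤ A i l

section QuadFormOn

variable {ι : Type*} (A : Matrix ι ι ℝ) (S : Finset ι) (v : ι → ℝ)

lemma quadFormOn_sub_const (c : ℝ) :
    quadFormOn (A - of fun _ _ => c) S v = quadFormOn A S v - c * (∑ i ∈ S, v i) ^ 2 := by
  rw [quadFormOn, quadFormOn, sq, sum_mul_sum, mul_sum, ← sum_sub_distrib]
  refine sum_congr rfl fun i _ => ?_
  rw [mul_sum, ← sum_sub_distrib]
  refine sum_congr rfl fun l _ => ?_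
  simp only [Matrix.sub_apply, of_apply]
  ring

lemma quadFormOn_eq_add_sdiff [DecidableEq ι] {C : Finset ι} (hCS : C ⊆ S)
    (hcross : ∀ i ∈ C, ∀ l ∈ S \ C, A i l = 0 ∧ A l i = 0) :
    quadFormOn A S v = quadFormOn A C v + quadFormOn A (S \ C) v := by
  have split (f : ι → ℝ) : ∑ i ∈ S, f i = ∑ i ∈ C, f i + ∑ i ∈ S \ C, f i := by
    rw [add_comm, sum_sdiff hCS]
  have hCD : ∑ i ∈ C, ∑ l ∈ S \ C, A i l * v i * v l = 0 :=
    sum_eq_zero fun i hi => sum_eq_zero fun l hl => by simp [(hcross i hi l hl).1]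
  have hDC : ∑ i ∈ S \ C, ∑ l ∈ C, A i l * v i * v l = 0 :=
    sum_eq_zero fun i hi => sum_eq_zero fun l hl => by simp [(hcross l hl i hi).2]
  simp only [quadFormOn, split, sum_add_distrib, hCD, hDC]
  ring

lemma quadFormOn_univ [Fintype ι] : quadFormOn A univ v = v ⬝ᵥ A *ᵥ v := by
  simp only [quadFormOn, dotProduct, mulVec, mul_sum]
  exact sum_congr rfl fun i _ => sum_congr rfl fun l _ => by ring

end QuadFormOn

lemma IsUltrametric.sub_const {ι : Type*} {A : Matrix ι ι ℝ} (hA : IsUltrametric A) (c : ℝ) :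
    IsUltrametric (A - of fun _ _ => c) := fun i l p hil hlp hip => by
  simpa [min_sub_sub_right] using hA i l p hil hlp hip

lemma IsUltrametric.eq_min_of_mem_filter {ι : Type*} {A : Matrix ι ι ℝ} (hA : IsUltrametric A)
    (hsymm : A.IsSymm) {S : Finset ι} {t : ℝ} (hmin : ∀ i ∈ S, ∀ l ∈ S, i ≠ l → t ≤ A i l)
    {i₀ i l : ι} (hi : i ∈ S) (hi₀ : i = i₀ ∨ t < A i i₀) (hl : l ∈ S)
    (hl₀ : ¬(l = i₀ ∨ t < A l i₀)) :
    A i l = t := by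
  simp only [not_or, not_lt] at hl₀
  obtain ⟨hli₀, hlt⟩ := hl₀
  have hil : i ≠ l := by
    rintro rfl
    rcases hi₀ with rfl | h
    exacts [hli₀ rfl, hlt.not_gt h]
  refine le_antisymm (not_lt.mp fun hgt => ?_) (hmin i hi l hl hil)
  rcases eq_or_ne i i₀ with rfl | hii₀
  · exact hlt.not_gt (hsymm.apply i l ▸ hgt)
  · have hit : t < A i i₀ := hi₀.resolve_left hii₀
    have := hA l i₀ i hli₀ hii₀.symm hil.symm
    rw [hsymm.apply i i₀, hsymm.apply i l] at this
    exact hlt.not_gt (lt_of_lt_of_le (lt_min hit hgt) this)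

lemma IsUltrametric.exists_cross_eq_min {ι : Type*} [DecidableEq ι] {A : Matrix ι ι ℝ}
    (hA : IsUltrametric A) (hsymm : A.IsSymm) {S : Finset ι} (hS : S.Nontrivial) :
    ∃ i₀ ∈ S, ∃ l₀ ∈ S, i₀ ≠ l₀ ∧ (∀ i ∈ S, ∀ l ∈ S, i ≠ l → A i₀ l₀ ≤ A i l) ∧
      ∃ C ⊂ S, S \ C ⊂ S ∧ ∀ i ∈ C, ∀ l ∈ S \ C, A i l = A i₀ l₀ ∧ A l i = A i₀ l₀ := by
  obtain ⟨⟨i₀, l₀⟩, h₀, hmin⟩ := S.offDiag.exists_min_image (fun p => A p.1 p.2)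
    (by obtain ⟨a, ha, b, hb, hab⟩ := hS; exact ⟨(a, b), mem_offDiag.mpr ⟨ha, hb, hab⟩⟩)
  obtain ⟨hi₀, hl₀, hi₀l₀⟩ : i₀ ∈ S ∧ l₀ ∈ S ∧ i₀ ≠ l₀ := mem_offDiag.mp h₀
  set t := A i₀ l₀
  have hmin' : ∀ i ∈ S, ∀ l ∈ S, i ≠ l → t ≤ A i l :=
    fun i hi l hl hil => hmin (i, l) (mem_offDiag.mpr ⟨hi, hl, hil⟩)
  -- `C` is the class of `i₀` for the equivalence relation `i = l ∨ t < A i l`.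
  set C := S.filter fun i => i = i₀ ∨ t < A i i₀
  have hl₀C : l₀ ∉ C := fun h => by
    rcases (mem_filter.mp h).2 with h | h
    · exact hi₀l₀ h.symm
    · rw [hsymm.apply i₀ l₀] at h
      exact lt_irrefl _ h
  have hCS : C ⊂ S := (ssubset_iff_of_subset (filter_subset _ _)).mpr ⟨l₀, hl₀, hl₀C⟩
  refine ⟨i₀, hi₀, l₀, hl₀, hi₀l₀, hmin', C, hCS,
    sdiff_ssubset hCS.subset ⟨i₀, mem_filter.mpr ⟨hi₀, .inl rfl⟩⟩, fun i hi l hl => ?_⟩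
  obtain ⟨hiS, hiC⟩ := mem_filter.mp hi
  obtain ⟨hlS, hlC⟩ := mem_sdiff.mp hl
  have := hA.eq_min_of_mem_filter hsymm hmin' hiS hiC hlS fun h => hlC (mem_filter.mpr ⟨hlS, h⟩)
  exact ⟨this, hsymm.apply i l ▸ this⟩

theorem IsUltrametric.quadFormOn_ge {ι : Type*} [DecidableEq ι] {A : Matrix ι ι ℝ}
    (hA : IsUltrametric A) (hsymm : A.IsSymm) {d : ℝ} (hdiag : ∀ i, A i i = d)
    (v : ι → ℝ) (S : Finset ι) {s η : ℝ} (hsd : s + η ≤ d)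
    (hoff : ∀ i ∈ S, ∀ l ∈ S, i ≠ l → s ≤ A i l ∧ A i l ≤ d - η) :
    s * (∑ i ∈ S, v i) ^ 2 + η * ∑ i ∈ S, v i ^ 2 ≤ quadFormOn A S v := by
  induction S using Finset.strongInduction generalizing A d s with
  | H S ih =>
  by_cases hS : S.Nontrivial
  swap
  · rcases S.eq_empty_or_nonempty with rfl | hne
    · simp [quadFormOn]
    obtain ⟨a, rfl⟩ := hne.exists_eq_singleton_or_nontrivial.resolve_right hS
    simp only [quadFormOn, sum_singleton, hdiag]
    nlinarith [sq_nonneg (v a)]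
  obtain ⟨i₀, hi₀, l₀, hl₀, hi₀l₀, hmin, C, hCS, hDS, hcross⟩ := hA.exists_cross_eq_min hsymm hS
  set t := A i₀ l₀
  have hst : s ≤ t := (hoff i₀ hi₀ l₀ hl₀ hi₀l₀).1
  have htd : t ≤ d - η := (hoff i₀ hi₀ l₀ hl₀ hi₀l₀).2
  have hC := ih C hCS (hA.sub_const t) (hsymm.sub (IsSymm.ext fun _ _ => rfl))
    (d := d - t) (s := 0) (fun i => by simp [hdiag]) (by linarith) fun i hi l hl hil => by
      simp only [Matrix.sub_apply, of_apply]
      have := hoff i (hCS.subset hi) l (hCS.subset hl) hil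
      have := hmin i (hCS.subset hi) l (hCS.subset hl) hil
      constructor <;> linarith
  have hD := ih (S \ C) hDS hA hsymm hdiag (s := t) (by linarith) fun i hi l hl hil =>
    ⟨hmin i (hDS.subset hi) l (hDS.subset hl) hil,
      (hoff i (hDS.subset hi) l (hDS.subset hl) hil).2⟩
  have hsplit := quadFormOn_eq_add_sdiff (A - of fun _ _ => t) S v hCS.subset
    fun i hi l hl => by simp [hcross i hi l hl]
  rw [quadFormOn_sub_const A S, quadFormOn_sub_const A (S \ C)] at hsplit
  have hsq : ∑ i ∈ S, v i ^ 2 = ∑ i ∈ C, v i ^ 2 + ∑ i ∈ S \ C, v i ^ 2 := by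
    rw [add_comm, sum_sdiff hCS.subset]
  have : s * (∑ i ∈ S, v i) ^ 2 ≤ t * (∑ i ∈ S, v i) ^ 2 := by gcongr
  rw [zero_mul, zero_add] at hC
  rw [hsq, mul_add]
  linarith

lemma sum_sq_pos_of_ne_zero {ι : Type*} [Fintype ι] {v : ι → ℝ} (hv : v ≠ 0) :
    0 < ∑ i, v i ^ 2 := by
  obtain ⟨i, hi⟩ := Function.ne_iff.mp hv
  exact (sum_pos_iff_of_nonneg fun j _ => sq_nonneg (v j)).mpr
    ⟨i, mem_univ i, sq_pos_of_ne_zero hi⟩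

section Chi

variable {ι : Type*} [Fintype ι] [DecidableEq ι]

lemma chi_eq_sum_inv_mulVec (M : Matrix ι ι ℝ) : chi M = ∑ i, (M⁻¹ *ᵥ 1) i := by
  simp [chi, mulVec, dotProduct]

lemma chi_eq_sum_of_mulVec_eq_one {M : Matrix ι ι ℝ} (hM : IsUnit M.det) {w : ι → ℝ}
    (hw : M *ᵥ w = 1) : chi M = ∑ i, w i := by
  rw [chi_eq_sum_inv_mulVec, ← hw, mulVec_mulVec, nonsing_inv_mul _ hM, one_mulVec]

lemma mulVec_nonsing_inv_mulVec {M : Matrix ι ι ℝ} (hM : IsUnit M.det) (v : ι → ℝ) :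
    M *ᵥ (M⁻¹ *ᵥ v) = v := by
  rw [mulVec_mulVec, mul_nonsing_inv _ hM, one_mulVec]

end Chi

namespace MemUltra

variable {ι : Type*} [Fintype ι] [DecidableEq ι] {η s : ℝ} {A : Matrix ι ι ℝ}

lemma quadForm_ge (hA : MemUltra η A) (hs : s ≤ 1 - η) (hsA : ∀ i l, i ≠ l → s ≤ A i l)
    (v : ι → ℝ) : s * (∑ i, v i) ^ 2 + η * ∑ i, v i ^ 2 ≤ v ⬝ᵥ A *ᵥ v := by
  rw [← quadFormOn_univ]
  exact IsUltrametric.quadFormOn_ge hA.2.2.2 hA.1 hA.2.1 v univ (by linarith)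
    fun i _ l _ hil => ⟨hsA i l hil, (hA.2.2.1 i l hil).2⟩

lemma posDef (hA : MemUltra η A) (hη : 0 < η) (hη1 : η ≤ 1) : A.PosDef := by
  refine posDef_iff_dotProduct_mulVec.mpr ⟨isHermitian_iff_isSymm.mpr hA.1, fun v hv => ?_⟩
  have hv2 := sum_sq_pos_of_ne_zero hv
  have := hA.quadForm_ge (s := 0) (by linarith) (fun i l hil => (hA.2.2.1 i l hil).1) v
  rw [star_trivial]
  nlinarith

lemma mul_sq_chi_add_le_chi (hA : MemUltra η A) (hη : 0 < η) (hη1 : η ≤ 1) (hs : s ≤ 1 - η)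
    (hsA : ∀ i l, i ≠ l → s ≤ A i l) :
    s * chi A ^ 2 + η * ∑ i, (A⁻¹ *ᵥ 1) i ^ 2 ≤ chi A := by
  have hdet := (hA.posDef hη hη1).det_pos.ne'.isUnit
  have := hA.quadForm_ge hs hsA (A⁻¹ *ᵥ 1)
  rwa [mulVec_nonsing_inv_mulVec hdet, ← chi_eq_sum_inv_mulVec, dotProduct_one,
    ← chi_eq_sum_inv_mulVec] at this

lemma chi_nonneg (hA : MemUltra η A) (hη : 0 < η) (hη1 : η ≤ 1) : 0 ≤ chi A := by
  have := hA.mul_sq_chi_add_le_chi (s := 0) hη hη1 (by linarith)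
    (fun i l hil => (hA.2.2.1 i l hil).1)
  nlinarith [sum_nonneg fun i (_ : i ∈ univ) => sq_nonneg ((A⁻¹ *ᵥ 1) i)]

lemma mul_chi_lt_one (hA : MemUltra η A) (hη : 0 < η) (hs0 : 0 ≤ s) (hs : s ≤ 1 - η)
    (hsA : ∀ i l, i ≠ l → s ≤ A i l) : s * chi A < 1 := by
  have hη1 : η ≤ 1 := by linarith
  rcases (hA.chi_nonneg hη hη1).eq_or_lt with h0 | hpos
  · simp [← h0]
  have hu : A⁻¹ *ᵥ 1 ≠ 0 := fun hu => hpos.ne' (by simp [chi_eq_sum_inv_mulVec, hu])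
  have := hA.mul_sq_chi_add_le_chi hη hη1 hs hsA
  nlinarith [sum_sq_pos_of_ne_zero hu]

end MemUltra

noncomputable def blockSumChi (s x y : ℝ) : ℝ := (x + y - 2 * s * x * y) / (1 - s ^ 2 * x * y)

section BlockSumChi

variable {s x x' y y' : ℝ}

lemma one_sub_sq_mul_mul_pos (hs : 0 ≤ s) (hsx : s * x < 1) (hy : 0 ≤ y) (hsy : s * y < 1) :
    0 < 1 - s ^ 2 * x * y := by
  nlinarith [mul_nonneg hs hy]

lemma blockSumChi_comm : blockSumChi s x y = blockSumChi s y x := by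
  unfold blockSumChi
  ring_nf

lemma blockSumChi_le_left (hs : 0 ≤ s) (hxx' : x ≤ x') (hsx' : s * x' < 1) (hy : 0 ≤ y)
    (hsy : s * y < 1) : blockSumChi s x y ≤ blockSumChi s x' y := by
  have hsx : s * x < 1 := lt_of_le_of_lt (by gcongr) hsx'
  rw [blockSumChi, blockSumChi, div_le_div_iff₀ (one_sub_sq_mul_mul_pos hs hsx hy hsy)
    (one_sub_sq_mul_mul_pos hs hsx' hy hsy)]
  -- the difference of the two sides is `(x' - x) (1 - s y)²`
  nlinarith [mul_nonneg (sub_nonneg.mpr hxx') (sq_nonneg (1 - s * y))]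

lemma blockSumChi_le_right (hs : 0 ≤ s) (hx : 0 ≤ x) (hsx : s * x < 1) (hyy' : y ≤ y')
    (hsy' : s * y' < 1) : blockSumChi s x y ≤ blockSumChi s x y' := by
  rw [blockSumChi_comm, blockSumChi_comm (x := x)]
  exact blockSumChi_le_left hs hyy' hsy' hx hsx

end BlockSumChi

section BlockSum

variable {g h : ℕ} {η s : ℝ} {A₁ : Matrix (Fin g) (Fin g) ℝ} {A₂ : Matrix (Fin h) (Fin h) ℝ}

lemma memUltra_blockSum (hA₁ : MemUltra η A₁) (hA₂ : MemUltra η A₂) (hs0 : 0 ≤ s)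
    (hsη : s ≤ 1 - η) (hsA₁ : ∀ i l, i ≠ l → s ≤ A₁ i l) (hsA₂ : ∀ i l, i ≠ l → s ≤ A₂ i l) :
    MemUltra η (blockSum A₁ A₂ s) := by
  refine ⟨hA₁.1.fromBlocks (by ext; rfl) hA₂.1, ?_, ?_, ?_⟩
  · rintro (i | i) <;> simp [blockSum, hA₁.2.1, hA₂.2.1]
  · rintro (i | i) (l | l) hil <;> simp_all [blockSum, hA₁.2.2.1, hA₂.2.2.1]
  · rintro (i | i) (l | l) (p | p) hil hlp hip <;> simp_all [blockSum, hA₁.2.2.2, hA₂.2.2.2]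

lemma blockSum_mulVec (w₁ : Fin g → ℝ) (w₂ : Fin h → ℝ) :
    blockSum A₁ A₂ s *ᵥ Sum.elim w₁ w₂ =
      Sum.elim (A₁ *ᵥ w₁ + fun _ => s * ∑ i, w₂ i) ((fun _ => s * ∑ i, w₁ i) + A₂ *ᵥ w₂) := by
  rw [blockSum, fromBlocks_mulVec]
  congr 2 <;> ext <;> simp [mulVec, dotProduct, mul_sum]

lemma chi_blockSum_of_isUnit (h₁ : IsUnit A₁.det) (h₂ : IsUnit A₂.det)
    (hA : IsUnit (blockSum A₁ A₂ s).det) (hD : 1 - s ^ 2 * chi A₁ * chi A₂ ≠ 0) :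
    chi (blockSum A₁ A₂ s) = blockSumChi s (chi A₁) (chi A₂) := by
  set x := chi A₁
  set y := chi A₂
  set u₁ := A₁⁻¹ *ᵥ 1
  set u₂ := A₂⁻¹ *ᵥ 1
  have hx : ∑ i, u₁ i = x := (chi_eq_sum_inv_mulVec A₁).symm
  have hy : ∑ i, u₂ i = y := (chi_eq_sum_inv_mulVec A₂).symm
  -- `(a, b)` solves `a + s y b = 1`, `s x a + b = 1`.
  set a := (1 - s * y) / (1 - s ^ 2 * x * y)
  set b := (1 - s * x) / (1 - s ^ 2 * x * y)
  have hw : blockSum A₁ A₂ s *ᵥ Sum.elim (a • u₁) (b • u₂) = 1 := by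
    rw [blockSum_mulVec, mulVec_smul, mulVec_smul, mulVec_nonsing_inv_mulVec h₁,
      mulVec_nonsing_inv_mulVec h₂]
    ext (i | i) <;> simp only [Sum.elim_inl, Sum.elim_inr, Pi.add_apply, Pi.smul_apply,
      Pi.one_apply, smul_eq_mul, ← mul_sum, hx, hy, a, b] <;>
      linear_combination mul_inv_cancel₀ hD
  rw [chi_eq_sum_of_mulVec_eq_one hA hw, Fintype.sum_sum_type]
  simp only [Sum.elim_inl, Sum.elim_inr, Pi.smul_apply, smul_eq_mul, ← mul_sum, hx, hy, a, b,
    blockSumChi]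
  field_simp
  ring

lemma chi_blockSum (hη : 0 < η) (hA₁ : MemUltra η A₁) (hA₂ : MemUltra η A₂) (hs0 : 0 ≤ s)
    (hsη : s ≤ 1 - η) (hsA₁ : ∀ i l, i ≠ l → s ≤ A₁ i l) (hsA₂ : ∀ i l, i ≠ l → s ≤ A₂ i l) :
    chi (blockSum A₁ A₂ s) = blockSumChi s (chi A₁) (chi A₂) := by
  have hη1 : η ≤ 1 := by linarith
  refine chi_blockSum_of_isUnit (hA₁.posDef hη hη1).det_pos.ne'.isUnit
    (hA₂.posDef hη hη1).det_pos.ne'.isUnit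
    ((memUltra_blockSum hA₁ hA₂ hs0 hsη hsA₁ hsA₂).posDef hη hη1).det_pos.ne'.isUnit
    (one_sub_sq_mul_mul_pos hs0 (hA₁.mul_chi_lt_one hη hs0 hsη hsA₁) (hA₂.chi_nonneg hη hη1)
      (hA₂.mul_chi_lt_one hη hs0 hsη hsA₂)).ne'

end BlockSum

/-- Lemma r2: if `A = A₁ ⊞_s A₂` and `Ā = Ā₁ ⊞_s Ā₂` with
`χ(A₁) ≥ χ(Ā₁)` and `χ(A₂) ≥ χ(Ā₂)`, then `χ(A) ≥ χ(Ā)`. -/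
theorem chi_blockSum_monotone {η : ℝ} (hη : 0 < η) {g h : ℕ}
    (A₁ B₁ : Matrix (Fin g) (Fin g) ℝ) (A₂ B₂ : Matrix (Fin h) (Fin h) ℝ)
    (hA₁ : MemUltra η A₁) (hB₁ : MemUltra η B₁)
    (hA₂ : MemUltra η A₂) (hB₂ : MemUltra η B₂) (s : ℝ)
    (hs0 : 0 ≤ s) (hsη : s ≤ 1 - η)
    (hsA₁ : ∀ i l, i ≠ l → s ≤ A₁ i l) (hsB₁ : ∀ i l, i ≠ l → s ≤ B₁ i l)
    (hsA₂ : ∀ i l, i ≠ l → s ≤ A₂ i l) (hsB₂ : ∀ i l, i ≠ l → s ≤ B₂ i l)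
    (h₁ : chi B₁ ≤ chi A₁) (h₂ : chi B₂ ≤ chi A₂) :
    chi (blockSum B₁ B₂ s) ≤ chi (blockSum A₁ A₂ s) := by
  have hη1 : η ≤ 1 := by linarith
  rw [chi_blockSum hη hB₁ hB₂ hs0 hsη hsB₁ hsB₂, chi_blockSum hη hA₁ hA₂ hs0 hsη hsA₁ hsA₂]
  calc blockSumChi s (chi B₁) (chi B₂)
      ≤ blockSumChi s (chi A₁) (chi B₂) :=
        blockSumChi_le_left hs0 h₁ (hA₁.mul_chi_lt_one hη hs0 hsη hsA₁) (hB₂.chi_nonneg hη hη1)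
          (hB₂.mul_chi_lt_one hη hs0 hsη hsB₂)
    _ ≤ blockSumChi s (chi A₁) (chi A₂) :=
        blockSumChi_le_right hs0 (hA₁.chi_nonneg hη hη1) (hA₁.mul_chi_lt_one hη hs0 hsη hsA₁) h₂
          (hA₂.mul_chi_lt_one hη hs0 hsη hsA₂)
end

section
/- Define Ξ on M_j inductively: Ξ(A) = 0 for A ∈ M_1, and if the maximal decomposition of A is A_1 ⊞_s ... ⊞_s A_m, then Ξ(A) = Σ_k Ξ(A_k) + (m-1)(1-s). For any r ≤ j - 1, the minimum of χ(A) over all A ∈ M_j with Ξ(A) = r equals χ(A^{(j)}_{1 - r/(j-1)}) = j/(j - r); that is, the equidistant matrix minimizes χ among ultrametric matrices with given Ξ-value. -/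
/-- The equidistant matrix `A_r^{(j)}`. -/
def eqMat (j : ℕ) (r : ℝ) : Matrix (Fin j) (Fin j) ℝ :=
  Matrix.of fun i l => if i = l then 1 else r

/-- The weight of the "attach to the best earlier vertex" spanning tree determined by an
ordering `σ` of the indices (for `k = σ⁻¹`-first index the empty `sSup` contributes `0`). -/
noncomputable def treeSum {j : ℕ} (A : Matrix (Fin j) (Fin j) ℝ) (σ : Equiv.Perm (Fin j)) : ℝ :=
  ∑ k : Fin j, sSup ((fun i : Fin j => A (σ i) (σ k)) '' {i | i < k})

/-- `Ξ(A) = (j-1) - (maximum spanning tree weight of A)`.  For ultrametric matrices the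
maximum spanning tree weight equals the supremum over orderings of the greedy tree weight,
and this formula agrees with the paper's inductive definition
`Ξ(A₁ ⊞_s ⋯ ⊞_s A_m) = Σ Ξ(A_k) + (m-1)(1-s)`, `Ξ = 0` on `M₁`. -/
noncomputable def Xi {j : ℕ} (A : Matrix (Fin j) (Fin j) ℝ) : ℝ :=
  ((j : ℝ) - 1) - ⨆ σ : Equiv.Perm (Fin j), treeSum A σ

open Matrix Finset

namespace Matrix

variable {ι : Type*} [Fintype ι]

theorem PosSemidef.dotProduct_mulVec_sq_le {A : Matrix ι ι ℝ} (hA : A.PosSemidef) (x y : ι → ℝ) :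
    (x ⬝ᵥ A *ᵥ y) ^ 2 ≤ (x ⬝ᵥ A *ᵥ x) * (y ⬝ᵥ A *ᵥ y) := by
  let _ := A.toSeminormedAddCommGroup hA
  let _ := A.toInnerProductSpace hA
  have hinner : ∀ u w : ι → ℝ, inner ℝ u w = u ⬝ᵥ A *ᵥ w := fun u w =>
    (dotProduct_comm _ _).trans (by simp)
  have := real_inner_mul_inner_self_le x y
  rwa [hinner, hinner x x, hinner y y, ← sq] at this

theorem one_dotProduct_mulVec_one (A : Matrix ι ι ℝ) : 1 ⬝ᵥ A *ᵥ 1 = ∑ i, ∑ l, A i l := by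
  simp [mulVec, dotProduct]

/-- The indicator of a partial equivalence relation is the Gram matrix of the indicator vectors
of its classes. -/
theorem posSemidef_of_symm_of_trans (R : ι → ι → Prop) [DecidableRel R]
    (hsymm : ∀ {i l}, R i l → R l i) (htrans : ∀ {i l p}, R i l → R l p → R i p) :
    (of fun i l => if R i l then (1 : ℝ) else 0).PosSemidef := by
  classical
  let cls : ι → Set ι := fun i => {q | R i q}
  let U : Matrix (Set ι) ι ℝ := of fun S i => if R i i ∧ cls i = S then 1 else 0
  have hR : ∀ i l, R i l ↔ R i i ∧ R l l ∧ cls i = cls l := by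
    refine fun i l => ⟨fun h => ⟨htrans h (hsymm h), htrans (hsymm h) h, ?_⟩,
      fun ⟨_, hl, he⟩ => (he ▸ hl : l ∈ cls i)⟩
    ext q
    exact ⟨fun hq => htrans (hsymm h) hq, fun hq => htrans h hq⟩
  convert posSemidef_conjTranspose_mul_self U using 1
  ext i l
  by_cases hi : R i i <;> simp [U, mul_apply, hR i l, hi, ite_and]

noncomputable def positiveEntries (M : Matrix ι ι ℝ) : Finset ℝ :=
  {v ∈ univ.image fun p : ι × ι => M p.1 p.2 | 0 < v}

theorem mem_positiveEntries {M : Matrix ι ι ℝ} {v : ℝ} :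
    v ∈ M.positiveEntries ↔ ∃ i l, M i l = v ∧ 0 < v := by
  simp [positiveEntries]

theorem pos_of_mem_positiveEntries {M : Matrix ι ι ℝ} {v : ℝ} (hv : v ∈ M.positiveEntries) :
    0 < v :=
  (mem_filter.mp hv).2

theorem card_positiveEntries_map_lt {M : Matrix ι ι ℝ} {c : ℝ} (hc : c ∈ M.positiveEntries) :
    (M.map fun v => max (v - c) 0).positiveEntries.card < M.positiveEntries.card := by
  have hsub : (M.map fun v => max (v - c) 0).positiveEntries ⊆
      (M.positiveEntries.erase c).image (· - c) := by
    intro v hv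
    obtain ⟨i, l, rfl, hpos⟩ := mem_positiveEntries.mp hv
    have hgt : c < M i l := by simpa using hpos
    refine mem_image.mpr ⟨M i l, mem_erase.mpr ⟨hgt.ne', ?_⟩, by simp [hgt.le]⟩
    exact mem_positiveEntries.mpr ⟨i, l, rfl, (pos_of_mem_positiveEntries hc).trans hgt⟩
  calc _ ≤ _ := card_le_card hsub
    _ ≤ (M.positiveEntries.erase c).card := card_image_le
    _ < M.positiveEntries.card := card_erase_lt_of_mem hc

/-- With `c` the least positive entry, `M = (M - c)⁺ + c • 1[M > 0]`, where `(M - c)⁺` is again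
ultrametric and has fewer distinct positive entries. -/
theorem posSemidef_of_ultrametric {M : Matrix ι ι ℝ} (hsymm : M.IsSymm)
    (hnonneg : ∀ i l, 0 ≤ M i l) (hultra : ∀ i l p, min (M i l) (M l p) ≤ M i p) :
    M.PosSemidef := by
  classical
  induction hn : M.positiveEntries.card using Nat.strong_induction_on generalizing M with
  | _ n ih =>
  rcases M.positiveEntries.eq_empty_or_nonempty with hempty | hne
  · have hzero : M = 0 := by
      ext i l
      by_contra h
      have : M i l ∈ M.positiveEntries :=
        mem_positiveEntries.mpr ⟨i, l, rfl, (hnonneg i l).lt_of_ne' h⟩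
      simp [hempty] at this
    exact hzero ▸ PosSemidef.zero
  set c := M.positiveEntries.min' hne
  have hcmem : c ∈ M.positiveEntries := min'_mem _ hne
  have hc0 : 0 < c := pos_of_mem_positiveEntries hcmem
  have hcle : ∀ i l, 0 < M i l → c ≤ M i l := fun i l h =>
    min'_le _ _ (mem_positiveEntries.mpr ⟨i, l, rfl, h⟩)
  set N := M.map fun v => max (v - c) 0
  have hmono : Monotone fun v : ℝ => max (v - c) 0 := fun a b h => by
    dsimp only; gcongr
  have hN : N.PosSemidef := ih _ (hn ▸ card_positiveEntries_map_lt hcmem) (hsymm.map _)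
    (fun i l => le_max_right _ _)
    (fun i l p => by simpa only [N, map_apply, ← hmono.map_min] using hmono (hultra i l p)) rfl
  have hE := posSemidef_of_symm_of_trans (fun i l => 0 < M i l)
    (fun {i l} h => by rwa [hsymm.apply i l])
    (fun {i l p} h₁ h₂ => (lt_min h₁ h₂).trans_le (hultra i l p))
  have hdecomp : M = N + c • of fun i l => if 0 < M i l then (1 : ℝ) else 0 := by
    ext i l
    by_cases h : 0 < M i l
    · simp [N, h, sub_nonneg.mpr (hcle i l h)]
    · have h0 : M i l = 0 := le_antisymm (not_lt.mp h) (hnonneg i l)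
      simp [N, h0, hc0.le]
  rw [hdecomp]
  exact hN.add (hE.smul hc0.le)

end Matrix

section Chi

variable {ι : Type*} [Fintype ι] [DecidableEq ι]

theorem chi_eq_one_dotProduct (B : Matrix ι ι ℝ) : chi B = 1 ⬝ᵥ B⁻¹ *ᵥ 1 := by
  simp [chi, mulVec, dotProduct]

theorem chi_eq_sum_of_mulVec_eq_one_s10 {B : Matrix ι ι ℝ} (hB : IsUnit B) {v : ι → ℝ}
    (hv : B *ᵥ v = 1) : chi B = ∑ i, v i := by
  have hinv : B⁻¹ *ᵥ 1 = v := by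
    rw [← hv, mulVec_mulVec, nonsing_inv_mul _ ((isUnit_iff_isUnit_det B).mp hB), one_mulVec]
  rw [chi_eq_one_dotProduct, hinv, one_dotProduct]

theorem chi_pos [Nonempty ι] {B : Matrix ι ι ℝ} (hB : B.PosDef) : 0 < chi B := by
  simpa [chi_eq_one_dotProduct] using hB.inv.dotProduct_mulVec_pos one_ne_zero

theorem sq_card_le_chi_mul_sum {A : Matrix ι ι ℝ} (hA : A.PosDef) :
    (Fintype.card ι : ℝ) ^ 2 ≤ chi A * ∑ i, ∑ l, A i l := by
  set v := A⁻¹ *ᵥ 1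
  have hv : A *ᵥ v = 1 := by
    rw [mulVec_mulVec, mul_nonsing_inv _ ((isUnit_iff_isUnit_det A).mp hA.isUnit), one_mulVec]
  have hcs := hA.posSemidef.dotProduct_mulVec_sq_le 1 v
  rwa [hv, dotProduct_comm v, ← chi_eq_one_dotProduct, one_dotProduct_mulVec_one, one_dotProduct,
    Pi.one_def, sum_const, card_univ, nsmul_one, mul_comm] at hcs

end Chi

theorem MemUltra.posDef_s10 {η : ℝ} {ι : Type*} [Fintype ι] [DecidableEq ι] [Nontrivial ι]
    {A : Matrix ι ι ℝ} (hA : MemUltra η A) (hη : 0 < η) : A.PosDef := by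
  obtain ⟨hsymm, hdiag, hoff, hultra⟩ := hA
  obtain ⟨i₀, l₀, h₀⟩ := exists_pair_ne ι
  have hη1 : 0 ≤ 1 - η := (hoff i₀ l₀ h₀).1.trans (hoff i₀ l₀ h₀).2
  set M := A - η • 1
  have hM : ∀ i l, M i l = if i = l then 1 - η else A i l := by
    intro i l
    by_cases h : i = l <;> simp [M, h, hdiag, one_apply]
  have hMle : ∀ i l, M i l ≤ 1 - η := fun i l => by
    rw [hM]; split_ifs with h
    exacts [le_rfl, (hoff i l h).2]
  have hMultra : ∀ i l p, min (M i l) (M l p) ≤ M i p := by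
    intro i l p
    by_cases hip : i = p
    · rw [hip, hM p p, if_pos rfl]
      exact min_le_of_left_le (hMle _ _)
    by_cases hil : i = l
    · subst hil; exact min_le_right _ _
    by_cases hlp : l = p
    · subst hlp; exact min_le_left _ _
    rw [hM, hM, hM, if_neg hil, if_neg hlp, if_neg hip, min_comm, ← hsymm.apply l p]
    exact hultra i p l hip (Ne.symm hlp) hil
  have hMpsd : M.PosSemidef := posSemidef_of_ultrametric (hsymm.sub (isSymm_one.smul η))
    (fun i l => by rw [hM]; split_ifs with h; exacts [hη1, (hoff i l h).1]) hMultra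
  simpa [M] using (PosDef.one.smul hη).add_posSemidef hMpsd

section Tree

variable {j : ℕ} [NeZero j]

theorem sum_row_le_add_treeSum (A : Matrix (Fin j) (Fin j) ℝ) {σ : Equiv.Perm (Fin j)} {c : Fin j}
    (hσ : σ 0 = c) : ∑ l, A c l ≤ A c c + treeSum A σ := by
  rw [← Equiv.sum_comp σ, treeSum, ← Fintype.sum_ite_eq' (0 : Fin j) fun _ => A c c,
    ← sum_add_distrib]
  refine sum_le_sum fun k _ => ?_
  rcases eq_or_ne k 0 with rfl | hk
  · simp [hσ]
  · rw [if_neg hk, zero_add, ← hσ]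
    exact le_csSup ((Set.toFinite _).image _).bddAbove ⟨0, Fin.pos_iff_ne_zero.mpr hk, rfl⟩

theorem sum_entries_le_of_Xi (A : Matrix (Fin j) (Fin j) ℝ) :
    ∑ i, ∑ l, A i l ≤ ∑ i, A i i + j * (j - 1 - Xi A) := by
  have hsup : ⨆ σ : Equiv.Perm (Fin j), treeSum A σ = j - 1 - Xi A := by rw [Xi]; ring
  calc ∑ i, ∑ l, A i l ≤ ∑ i, (A i i + ⨆ σ : Equiv.Perm (Fin j), treeSum A σ) :=
        sum_le_sum fun c _ => (sum_row_le_add_treeSum A (Equiv.swap_apply_left 0 c)).trans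
          (by gcongr; exact le_ciSup (Set.finite_range _).bddAbove _)
    _ = ∑ i, A i i + j * (j - 1 - Xi A) := by
        rw [sum_add_distrib, sum_const, card_univ, Fintype.card_fin, nsmul_eq_mul, hsup]

theorem treeSum_eqMat (ρ : ℝ) (σ : Equiv.Perm (Fin j)) :
    treeSum (eqMat j ρ) σ = (j - 1) * ρ := by
  have hterm : ∀ k : Fin j, sSup ((fun i => eqMat j ρ (σ i) (σ k)) '' {i | i < k})
      = ρ - if k = 0 then ρ else 0 := by
    intro k
    rcases eq_or_ne k 0 with rfl | hk
    · simp
    have himg : (fun i => eqMat j ρ (σ i) (σ k)) '' {i | i < k} = {ρ} :=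
      (Set.image_congr fun i (hi : i < k) => by simp [eqMat, hi.ne]).trans
        (Set.Nonempty.image_const ⟨0, Fin.pos_iff_ne_zero.mpr hk⟩ ρ)
    simp [himg, hk]
  simp only [treeSum, hterm, sum_sub_distrib, sum_const, card_univ, Fintype.card_fin,
    Fintype.sum_ite_eq', nsmul_eq_mul]
  ring

theorem Xi_eqMat (ρ : ℝ) : Xi (eqMat j ρ) = (j - 1) * (1 - ρ) := by
  simp only [Xi, treeSum_eqMat, ciSup_const]
  ring

end Tree

section Equidistant

variable {j : ℕ}

theorem eqMat_memUltra {η ρ : ℝ} (hρ0 : 0 ≤ ρ) (hρ : ρ ≤ 1 - η) : MemUltra η (eqMat j ρ) :=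
  ⟨IsSymm.ext fun i l => by simp [eqMat, eq_comm], fun i => by simp [eqMat],
    fun i l h => by simp [eqMat, h, hρ0, hρ],
    fun i l p hil hlp hip => by simp [eqMat, hil, hlp, hip]⟩

theorem sum_eqMat_row (ρ : ℝ) (i : Fin j) : ∑ l, eqMat j ρ i l = 1 + (j - 1) * ρ := by
  have hentry : ∀ l, eqMat j ρ i l = ρ + if i = l then 1 - ρ else 0 := fun l => by
    by_cases h : i = l <;> simp [eqMat, h]
  simp only [hentry, sum_add_distrib, sum_const, card_univ, Fintype.card_fin, nsmul_eq_mul,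
    Fintype.sum_ite_eq]
  ring

theorem chi_eqMat {ρ : ℝ} (hunit : IsUnit (eqMat j ρ)) (hne : 1 + (j - 1) * ρ ≠ 0) :
    chi (eqMat j ρ) = j / (1 + (j - 1) * ρ) := by
  have hv : eqMat j ρ *ᵥ (fun _ => (1 + (j - 1) * ρ)⁻¹) = 1 := by
    ext i
    simp [mulVec, dotProduct, ← sum_mul, sum_eqMat_row, hne]
  rw [chi_eq_sum_of_mulVec_eq_one_s10 hunit hv, sum_const, card_univ, Fintype.card_fin, nsmul_eq_mul,
    div_eq_mul_inv]

end Equidistant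

theorem MemUltra.card_div_le_chi {η : ℝ} {j : ℕ} [NeZero j] [Nontrivial (Fin j)]
    {A : Matrix (Fin j) (Fin j) ℝ} (hA : MemUltra η A) (hη : 0 < η) (hXi : Xi A < j) :
    j / (j - Xi A) ≤ chi A := by
  have hpd := hA.posDef_s10 hη
  have hS := sum_entries_le_of_Xi A
  have hcs := sq_card_le_chi_mul_sum hpd
  have hpos := chi_pos hpd
  simp only [hA.2.1, sum_const, card_univ, Fintype.card_fin, nsmul_eq_mul, mul_one] at hS hcs
  have hj : (0 : ℝ) < j := Nat.cast_pos.mpr (NeZero.pos j)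
  rw [div_le_iff₀ (sub_pos.mpr hXi)]
  nlinarith

theorem chi_min_over_Xi_level_general {η : ℝ} (hη : 0 < η) {j : ℕ} (hj : 2 ≤ j) (r : ℝ)
    (hr : r ≤ (j : ℝ) - 1)
    (hrη : 1 - r / ((j : ℝ) - 1) ≤ 1 - η) :
    MemUltra η (eqMat j (1 - r / ((j : ℝ) - 1))) ∧
    Xi (eqMat j (1 - r / ((j : ℝ) - 1))) = r ∧
    chi (eqMat j (1 - r / ((j : ℝ) - 1))) = (j : ℝ) / ((j : ℝ) - r) ∧
    (∀ A : Matrix (Fin j) (Fin j) ℝ, MemUltra η A → Xi A = r →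
      (j : ℝ) / ((j : ℝ) - r) ≤ chi A) := by
  have : Nontrivial (Fin j) := Fin.nontrivial_iff_two_le.mpr hj
  have : NeZero j := ⟨by omega⟩
  have hj1 : (0 : ℝ) < j - 1 := by
    have : (2 : ℝ) ≤ j := by exact_mod_cast hj
    linarith
  set ρ := 1 - r / ((j : ℝ) - 1)
  have hρ0 : 0 ≤ ρ := sub_nonneg.mpr ((div_le_one hj1).mpr hr)
  have hρr : 1 + (j - 1) * ρ = j - r := by
    rw [mul_sub, mul_one, mul_div_cancel₀ _ hj1.ne']
    ring
  have hjr : r < j := by linarith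
  have hmem : MemUltra η (eqMat j ρ) := eqMat_memUltra hρ0 hrη
  refine ⟨hmem, ?_, ?_, fun A hA hXi => hXi ▸ hA.card_div_le_chi hη (hXi ▸ hjr)⟩
  · rw [Xi_eqMat, sub_sub_cancel, mul_div_cancel₀ _ hj1.ne']
  · rw [chi_eqMat (hmem.posDef_s10 hη).isUnit (hρr ▸ (sub_pos.mpr hjr).ne'), hρr]

/-- Proposition prop5*: for `r ≤ j - 1`, the minimum of `χ` over
`A ∈ M_j` with `Ξ(A) = r` is attained at the equidistant matrix `A^{(j)}_{1-r/(j-1)}`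
and equals `j/(j-r)`. -/
theorem chi_min_over_Xi_level {η : ℝ} (hη : 0 < η) {j : ℕ} (hj : 2 ≤ j) (r : ℝ)
    (hr0 : 0 ≤ r) (hr : r ≤ (j : ℝ) - 1)
    (hrη : 1 - r / ((j : ℝ) - 1) ≤ 1 - η) :
    MemUltra η (eqMat j (1 - r / ((j : ℝ) - 1))) ∧
    Xi (eqMat j (1 - r / ((j : ℝ) - 1))) = r ∧
    chi (eqMat j (1 - r / ((j : ℝ) - 1))) = (j : ℝ) / ((j : ℝ) - r) ∧
    (∀ A : Matrix (Fin j) (Fin j) ℝ, MemUltra η A → Xi A = r →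
      (j : ℝ) / ((j : ℝ) - r) ≤ chi A) :=
  chi_min_over_Xi_level_general hη hj r hr hrη
end
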